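/- Weak tropical Nullstellensatz: let 𝔞 be a finitely generated ideal of the commutative semiring 𝕋[x_1,…,x_n] with 𝔞 ≠ 𝕋[x_1,…,x_n]. Then Z(𝔞) = {a ∈ 𝕋^n : f(a) ∈ 𝕌̄ for all f ∈ 𝔞} is nonempty. Equivalently, if a finitely generated ideal 𝔞 satisfies Z(𝔞) = ∅, then 𝔞 = 𝕋[x_1,…,x_n]. -/

import Mathlib

/-- The extended tropical semiring `𝕋`: tangible reals `(a, false)`,
ghost reals `(a, true)`, and `none` = `-∞`. -/
def T : Type := Option (ℝ × Bool)

namespace T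

/-- The tangible element of value `a`. -/
def tang (a : ℝ) : T := some (a, false)

/-- The ghost element `a^ν` of value `a`. -/
def ghost (a : ℝ) : T := some (a, true)

/-- Tropical addition on `𝕋`. -/
noncomputable def add : T → T → T
  | none, y => y
  | some p, none => some p
  | some (a, s), some (b, t) =>
      if a < b then some (b, t) else if b < a then some (a, s) else some (a, true)

/-- Tropical multiplication on `𝕋`. -/
noncomputable def mul : T → T → T
  | none, _ => none
  | some _, none => none
  | some (a, s), some (b, t) => some (a + b, s || t)

lemma add_assoc' : ∀ x y z : T, add (add x y) z = add x (add y z) := by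
  rintro (_ | ⟨a, s⟩) (_ | ⟨b, t⟩) (_ | ⟨c, u⟩) <;>
    simp only [add] <;>
    (try delta T) <;>
    (try split_ifs) <;>
    simp only [add] <;>
    (try delta T) <;>
    (try split_ifs) <;>
    first
      | rfl
      | (exfalso; linarith)
      | (refine congrArg some ?_; refine Prod.ext ?_ ?_ <;>
          first | rfl | linarith | simp)

lemma add_comm' : ∀ x y : T, add x y = add y x := by
  rintro (_ | ⟨a, s⟩) (_ | ⟨b, t⟩) <;>
    simp only [add] <;>
    (try delta T) <;>
    (try split_ifs) <;>
    first
      | rfl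
      | (exfalso; linarith)
      | (refine congrArg some ?_; refine Prod.ext ?_ ?_ <;>
          first | rfl | linarith | simp)

lemma mul_assoc' : ∀ x y z : T, mul (mul x y) z = mul x (mul y z) := by
  rintro (_ | ⟨a, s⟩) (_ | ⟨b, t⟩) (_ | ⟨c, u⟩) <;>
    simp [mul, add_assoc, Bool.or_assoc] <;> rfl

lemma mul_comm' : ∀ x y : T, mul x y = mul y x := by
  rintro (_ | ⟨a, s⟩) (_ | ⟨b, t⟩) <;> simp [mul, add_comm, Bool.or_comm] <;> rfl

lemma left_distrib' : ∀ x y z : T, mul x (add y z) = add (mul x y) (mul x z) := by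
  rintro (_ | ⟨a, s⟩) (_ | ⟨b, t⟩) (_ | ⟨c, u⟩) <;>
    simp only [add, mul] <;>
    (try delta T) <;>
    (try split_ifs) <;>
    simp only [add, mul] <;>
    (try delta T) <;>
    (try split_ifs) <;>
    first
      | rfl
      | (exfalso; linarith)
      | (refine congrArg some ?_; refine Prod.ext ?_ ?_ <;>
          first | rfl | linarith | simp)

noncomputable instance : Zero T := ⟨none⟩
noncomputable instance : One T := ⟨some (0, false)⟩
noncomputable instance : Add T := ⟨add⟩
noncomputable instance : Mul T := ⟨mul⟩

noncomputable instance : CommSemiring T where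
  add := (· + ·)
  zero := 0
  add_assoc := add_assoc'
  zero_add := fun x => by cases x <;> rfl
  add_zero := fun x => by cases x <;> rfl
  add_comm := add_comm'
  mul := (· * ·)
  one := 1
  mul_assoc := mul_assoc'
  one_mul := fun x => by
    show mul (some (0, false)) x = x
    rcases x with _ | ⟨a, s⟩ <;> simp [mul] <;> rfl
  mul_one := fun x => by
    show mul x (some (0, false)) = x
    rcases x with _ | ⟨a, s⟩ <;> simp [mul] <;> rfl
  mul_comm := mul_comm'
  zero_mul := fun x => by cases x <;> rfl
  mul_zero := fun x => by cases x <;> rfl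
  left_distrib := left_distrib'
  right_distrib := fun x y z => by
    show mul (add x y) z = add (mul x z) (mul y z)
    rw [mul_comm', left_distrib', mul_comm' z x, mul_comm' z y]
  nsmul := nsmulRec

/-- Membership in the ghost part `𝕌̄ = 𝕌 ∪ {-∞}` of `𝕋`. -/
def isGhost : T → Prop
  | none => True
  | some (_, s) => s = true

/-- Membership in the tangible part `ℝ ∪ {-∞}` of `𝕋`. -/
def isTangible : T → Prop
  | none => True
  | some (_, s) => s = false

/-- The underlying real value (junk value `0` at `-∞`); this is `π` on elements `≠ -∞`. -/
def val : T → ℝ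
  | none => 0
  | some (a, _) => a

/-- The ghost map `ν`. -/
def nu : T → T
  | none => none
  | some (a, _) => some (a, true)

end T

namespace T

/-- The model value in the half line `[0,∞)`: `-∞ ↦ 0`, an element of value `a ↦ exp a`. -/
noncomputable def gval : T → ℝ
  | none => 0
  | some (a, _) => Real.exp a

lemma nu_isGhost : ∀ x : T, isGhost (nu x)
  | none => trivial
  | some (_, _) => rfl

lemma gval_injOn_tang : Set.InjOn gval {x : T | isTangible x} := by
  rintro (_ | ⟨a, s⟩) hx (_ | ⟨b, t⟩) hy h <;>
    simp only [gval, Set.mem_setOf_eq, isTangible] at hx hy h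
  · rfl
  · exact absurd h.symm (Real.exp_pos b).ne'
  · exact absurd h (Real.exp_pos a).ne'
  · rw [Real.exp_eq_exp] at h; subst hx; subst hy; subst h; rfl

lemma gval_injOn_ghost : Set.InjOn gval {x : T | isGhost x} := by
  rintro (_ | ⟨a, s⟩) hx (_ | ⟨b, t⟩) hy h <;>
    simp only [gval, Set.mem_setOf_eq, isGhost] at hx hy h
  · rfl
  · exact absurd h.symm (Real.exp_pos b).ne'
  · exact absurd h (Real.exp_pos a).ne'
  · rw [Real.exp_eq_exp] at h; subst hx; subst hy; subst h; rfl

lemma gval_image_tang : gval '' {x : T | isTangible x} = Set.Ici 0 := by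
  ext y
  constructor
  · rintro ⟨(_ | ⟨a, s⟩), hx, rfl⟩
    · exact Set.self_mem_Ici
    · exact le_of_lt (by simpa [gval] using Real.exp_pos a)
  · intro hy
    rcases eq_or_lt_of_le (Set.mem_Ici.mp hy : (0 : ℝ) ≤ y) with h | h
    · exact ⟨none, trivial, h⟩
    · exact ⟨some (Real.log y, false), rfl, by simp [gval, Real.exp_log h]⟩

lemma gval_image_ghost : gval '' {x : T | isGhost x} = Set.Ici 0 := by
  ext y
  constructor
  · rintro ⟨(_ | ⟨a, s⟩), hx, rfl⟩
    · exact Set.self_mem_Ici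
    · exact le_of_lt (by simpa [gval] using Real.exp_pos a)
  · intro hy
    rcases eq_or_lt_of_le (Set.mem_Ici.mp hy : (0 : ℝ) ≤ y) with h | h
    · exact ⟨none, trivial, h⟩
    · exact ⟨some (Real.log y, true), rfl, by simp [gval, Real.exp_log h]⟩

/-- The closed sets of the topology on `𝕋`: both the tangible and the ghost layers are
closed in the model `[0,∞)` of `𝕌̄`, and the ghost image of the tangible layer is
contained in the set. -/
def TIsClosed (W : Set T) : Prop :=
  IsClosed (gval '' (W ∩ {x | isTangible x})) ∧
  IsClosed (gval '' (W ∩ {x | isGhost x})) ∧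
  nu '' (W ∩ {x | isTangible x}) ⊆ W ∩ {x | isGhost x}

/-- The topology on `𝕋`. -/
noncomputable instance : TopologicalSpace T :=
  TopologicalSpace.ofClosed {W | TIsClosed W}
    (by
      refine ⟨?_, ?_, ?_⟩ <;> simp [TIsClosed])
    (fun A hA => by
      rcases A.eq_empty_or_nonempty with rfl | hne
      · rw [Set.sInter_empty]
        refine ⟨?_, ?_, ?_⟩
        · rw [Set.univ_inter, gval_image_tang]; exact isClosed_Ici
        · rw [Set.univ_inter, gval_image_ghost]; exact isClosed_Ici
        · rintro y ⟨x, ⟨-, _⟩, rfl⟩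
          exact ⟨trivial, nu_isGhost x⟩
      · have : Nonempty A := hne.to_subtype
        have h1 : (⋂₀ A) ∩ {x : T | isTangible x}
            = ⋂ (W : A), ((W : Set T) ∩ {x | isTangible x}) := by
          ext x
          simp only [Set.mem_inter_iff, Set.mem_sInter, Set.mem_iInter, Set.mem_setOf_eq]
          constructor
          · rintro ⟨h, ht⟩ W; exact ⟨h W W.2, ht⟩
          · intro h
            obtain ⟨W, hW⟩ := hne
            exact ⟨fun V hV => (h ⟨V, hV⟩).1, (h ⟨W, hW⟩).2⟩
        have h2 : (⋂₀ A) ∩ {x : T | isGhost x}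
            = ⋂ (W : A), ((W : Set T) ∩ {x | isGhost x}) := by
          ext x
          simp only [Set.mem_inter_iff, Set.mem_sInter, Set.mem_iInter, Set.mem_setOf_eq]
          constructor
          · rintro ⟨h, ht⟩ W; exact ⟨h W W.2, ht⟩
          · intro h
            obtain ⟨W, hW⟩ := hne
            exact ⟨fun V hV => (h ⟨V, hV⟩).1, (h ⟨W, hW⟩).2⟩
        refine ⟨?_, ?_, ?_⟩
        · rw [h1, Set.InjOn.image_iInter_eq
            (gval_injOn_tang.mono (Set.iUnion_subset fun W => Set.inter_subset_right))]
          exact isClosed_iInter fun W => (hA W.2).1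
        · rw [h2, Set.InjOn.image_iInter_eq
            (gval_injOn_ghost.mono (Set.iUnion_subset fun W => Set.inter_subset_right))]
          exact isClosed_iInter fun W => (hA W.2).2.1
        · rintro y ⟨x, ⟨hx, hxt⟩, rfl⟩
          refine ⟨fun W hW => ((hA hW).2.2 ⟨x, ⟨hx W hW, hxt⟩, rfl⟩).1, nu_isGhost x⟩)
    (fun A hA B hB => by
      have h1 : (A ∪ B) ∩ {x : T | isTangible x}
          = (A ∩ {x | isTangible x}) ∪ (B ∩ {x | isTangible x}) :=
        Set.union_inter_distrib_right A B _
      have h2 : (A ∪ B) ∩ {x : T | isGhost x}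
          = (A ∩ {x | isGhost x}) ∪ (B ∩ {x | isGhost x}) :=
        Set.union_inter_distrib_right A B _
      refine ⟨?_, ?_, ?_⟩
      · rw [h1, Set.image_union]; exact hA.1.union hB.1
      · rw [h2, Set.image_union]; exact hA.2.1.union hB.2.1
      · rintro y ⟨x, ⟨hx, hxt⟩, rfl⟩
        rcases hx with hxA | hxB
        · have h := hA.2.2 ⟨x, ⟨hxA, hxt⟩, rfl⟩
          exact ⟨Or.inl h.1, h.2⟩
        · have h := hB.2.2 ⟨x, ⟨hxB, hxt⟩, rfl⟩
          exact ⟨Or.inr h.1, h.2⟩)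

end T

/-! At the point `(t^ν, …, t^ν)` every nonconstant term `c x^d` of `f` evaluates to the ghost
element `(c + |d| t)^ν`, so `f` evaluates to its constant term plus a ghost. This is ghost when the
constant term is ghost or `-∞`; otherwise the constant term is a unit, so if `f` is not a unit it
has a nonconstant term, which absorbs the constant term once `t` is large. A proper ideal contains
no unit, so all of its finitely many generators evaluate to ghosts for one common large `t`, and
since `𝕌̄` is an ideal of `𝕋`, so does every element of the ideal. -/

namespace MvPolynomial

variable {R σ : Type*} [CommSemiring R]

lemma eval_const_eq (x : R) (f : MvPolynomial σ R) :
    eval (fun _ => x) f = ∑ d ∈ f.support, coeff d f * x ^ d.degree := by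
  rw [eval_eq]
  refine Finset.sum_congr rfl fun d _ => ?_
  rw [Finset.prod_pow_eq_pow_sum, Finsupp.degree_apply]

lemma eval_const_eq_coeff_zero_add [DecidableEq σ] (x : R) (f : MvPolynomial σ R) :
    eval (fun _ => x) f = coeff 0 f + ∑ d ∈ f.support.erase 0, coeff d f * x ^ d.degree := by
  rw [eval_const_eq]
  by_cases h0 : 0 ∈ f.support
  · rw [← Finset.add_sum_erase _ _ h0, map_zero, pow_zero, mul_one]
  · rw [Finset.erase_eq_of_notMem h0, notMem_support_iff.mp h0, zero_add]

lemma eq_C_coeff_zero_of_support_subset {f : MvPolynomial σ R}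
    (h : f.support ⊆ {0}) : f = C (coeff 0 f) :=
  totalDegree_eq_zero_iff_eq_C.mp <| (totalDegree_eq_zero_iff σ f).mpr fun d hd i => by
    rw [Finset.mem_singleton.mp (h hd), Finsupp.zero_apply]

end MvPolynomial

namespace T

lemma ghost_mul_ghost (a b : ℝ) : ghost a * ghost b = ghost (a + b) := rfl

lemma mul_ghost {x : T} (hx : x ≠ 0) (b : ℝ) : x * ghost b = ghost (val x + b) := by
  rcases x with _ | ⟨a, s⟩
  · exact absurd rfl hx
  · show some (a + b, s || true) = some (a + b, true)
    rw [Bool.or_true]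

lemma ghost_pow_succ (a : ℝ) (k : ℕ) : ghost a ^ (k + 1) = ghost ((k + 1) * a) := by
  induction k with
  | zero => rw [zero_add, pow_one, Nat.cast_zero, zero_add, one_mul]
  | succ k ih => rw [pow_succ, ih, ghost_mul_ghost]; congr 1; push_cast; ring

lemma mul_ghost_pow {x : T} (hx : x ≠ 0) (a : ℝ) {k : ℕ} (hk : k ≠ 0) :
    x * ghost a ^ k = ghost (val x + k * a) := by
  obtain ⟨k, rfl⟩ := Nat.exists_eq_succ_of_ne_zero hk
  rw [ghost_pow_succ, mul_ghost hx, Nat.cast_succ]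

lemma add_ghost_of_val_le {x : T} {b : ℝ} (h : val x ≤ b) : x + ghost b = ghost b := by
  rcases x with _ | ⟨a, s⟩
  · rfl
  · rcases (show a ≤ b from h).lt_or_eq with hab | rfl
    · exact if_pos hab
    · exact (if_neg (lt_irrefl a)).trans (if_neg (lt_irrefl a))

lemma ghost_add_ghost (a b : ℝ) : ghost a + ghost b = ghost (max a b) := by
  rcases le_total a b with hab | hba
  · rw [max_eq_right hab]; exact add_ghost_of_val_le hab
  · rw [max_eq_left hba, add_comm]; exact add_ghost_of_val_le hba

lemma isGhost_or_isUnit : ∀ x : T, isGhost x ∨ IsUnit x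
  | none => Or.inl trivial
  | some (_, true) => Or.inl rfl
  | some (a, false) => Or.inr <| IsUnit.of_mul_eq_one (tang (-a)) <| by
      show some (a + -a, false || false) = some (0, false)
      rw [add_neg_cancel, Bool.or_false]

lemma isGhost_add {x y : T} (hx : isGhost x) (hy : isGhost y) : isGhost (x + y) := by
  rcases x with _ | ⟨a, s⟩
  · exact hy
  rcases y with _ | ⟨b, u⟩
  · exact hx
  obtain rfl : s = true := hx
  obtain rfl : u = true := hy
  show isGhost (ghost a + ghost b)
  rw [ghost_add_ghost]
  rfl

lemma isGhost_mul_left (x : T) {y : T} (hy : isGhost y) : isGhost (x * y) := by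
  rcases x with _ | ⟨a, s⟩
  · trivial
  rcases y with _ | ⟨b, u⟩
  · trivial
  obtain rfl : u = true := hy
  exact Bool.or_true s

def ghostIdeal : Ideal T where
  carrier := {x | isGhost x}
  zero_mem' := trivial
  add_mem' := isGhost_add
  smul_mem' := isGhost_mul_left

lemma ghost_mem_ghostIdeal (a : ℝ) : ghost a ∈ ghostIdeal := rfl

end T

namespace T

open MvPolynomial Filter

lemma eventually_eval_ghost_mem_ghostIdeal {σ : Type*} {f : MvPolynomial σ T} (hf : ¬IsUnit f) :
    ∀ᶠ t in atTop, eval (fun _ => ghost t) f ∈ ghostIdeal := by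
  classical
  have hterm : ∀ d ∈ f.support.erase 0, ∀ t : ℝ,
      coeff d f * ghost t ^ d.degree = ghost (val (coeff d f) + d.degree * t) := fun d hd t =>
    mul_ghost_pow (mem_support_iff.mp (Finset.mem_of_mem_erase hd)) t
      ((Finsupp.degree_eq_zero_iff d).not.mpr (Finset.ne_of_mem_erase hd))
  have hsum : ∀ s ⊆ f.support.erase 0, ∀ t : ℝ,
      ∑ d ∈ s, coeff d f * ghost t ^ d.degree ∈ ghostIdeal := fun s hs t =>
    Ideal.sum_mem _ fun d hd => by rw [hterm d (hs hd)]; exact ghost_mem_ghostIdeal _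
  simp_rw [eval_const_eq_coeff_zero_add]
  by_cases hc₀ : coeff 0 f ∈ ghostIdeal
  · exact Eventually.of_forall fun t => add_mem hc₀ (hsum _ subset_rfl t)
  obtain ⟨d₀, hd₀⟩ : (f.support.erase 0).Nonempty := by
    by_contra hempty
    rw [Finset.not_nonempty_iff_eq_empty, Finset.erase_eq_empty_iff,
      ← Finset.subset_singleton_iff] at hempty
    apply hf
    rw [eq_C_coeff_zero_of_support_subset hempty]
    exact ((isGhost_or_isUnit _).resolve_left hc₀).map C
  have hdeg : (1 : ℝ) ≤ d₀.degree := by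
    exact_mod_cast Nat.one_le_iff_ne_zero.mpr
      ((Finsupp.degree_eq_zero_iff d₀).not.mpr (Finset.ne_of_mem_erase hd₀))
  filter_upwards [eventually_ge_atTop 0, eventually_ge_atTop (val (coeff 0 f) - val (coeff d₀ f))]
    with t ht₀ ht
  rw [← Finset.add_sum_erase _ _ hd₀, ← add_assoc, hterm d₀ hd₀, add_ghost_of_val_le (by nlinarith)]
  exact add_mem (ghost_mem_ghostIdeal _) (hsum _ (Finset.erase_subset _ _) t)

end T

/-- Weak tropical Nullstellensatz: a finitely generated proper ideal
of `𝕋[x_1,…,x_n]` has a nonempty tropical algebraic set. -/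
theorem tropical_weak_nullstellensatz (n : ℕ) (I : Ideal (MvPolynomial (Fin n) T))
    (hfg : I.FG) (hproper : I ≠ ⊤) :
    ∃ a : Fin n → T, ∀ f ∈ I, T.isGhost (MvPolynomial.eval a f) := by
  obtain ⟨s, rfl⟩ := hfg
  have hgen : ∀ f ∈ s, ∀ᶠ t in Filter.atTop,
      MvPolynomial.eval (fun _ => T.ghost t) f ∈ T.ghostIdeal := fun f hf =>
    T.eventually_eval_ghost_mem_ghostIdeal fun hu =>
      hproper (Ideal.eq_top_of_isUnit_mem _ (Ideal.subset_span hf) hu)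
  obtain ⟨t, ht⟩ := ((Filter.eventually_all_finset s).mpr hgen).exists
  exact ⟨fun _ => T.ghost t, fun f hf =>
    (Ideal.span_le (I := T.ghostIdeal.comap (MvPolynomial.eval _))).mpr ht hf⟩
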